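/- Let 0 < a < 1, R, R_d ∈ SO(3) with ‖R − R_d‖ ≤ 2√(2a), and e_R = ½(R_dᵀR − RᵀR_d)^∨. Then (1−a)/2 · ‖R − R_d‖² ≤ ‖e_R‖². -/

import Mathlib

open Matrix Real

noncomputable def hat (v : Fin 3 → ℝ) : Matrix (Fin 3) (Fin 3) ℝ :=
  !![0, -v 2, v 1; v 2, 0, -v 0; -v 1, v 0, 0]

noncomputable def vee (A : Matrix (Fin 3) (Fin 3) ℝ) : Fin 3 → ℝ := ![A 2 1, A 0 2, A 1 0]

/-- Frobenius norm of a 3×3 real matrix: ‖A‖ = √(tr(Aᵀ A)). -/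
noncomputable def fnorm (A : Matrix (Fin 3) (Fin 3) ℝ) : ℝ := Real.sqrt ((Aᵀ * A).trace)

/-- Euclidean norm on ℝ³. -/
noncomputable def enorm' (v : Fin 3 → ℝ) : ℝ := Real.sqrt (v ⬝ᵥ v)

/-- The special orthogonal group SO(3). -/
def SO3 (R : Matrix (Fin 3) (Fin 3) ℝ) : Prop := Rᵀ * R = 1 ∧ R.det = 1

/-! With `Q = R_dᵀ R ∈ SO(3)` and `ψ = 3 - tr Q`, orthogonality gives `‖R - R_d‖² = 2ψ`. The
diagonal cofactor identities `adj Q = Qᵀ` together with the unit rows of `Q` give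
`‖(Q - Qᵀ)^∨‖² = ψ (4 - ψ)`, so `‖e_R‖² = ψ (4 - ψ) / 4`. The closeness hypothesis says
`ψ ≤ 4a`, and `(1 - a) ψ ≤ ψ (4 - ψ) / 4` is just `ψ (4a - ψ) ≥ 0`. -/

lemma fnorm_sq (A : Matrix (Fin 3) (Fin 3) ℝ) : fnorm A ^ 2 = (Aᵀ * A).trace := by
  refine Real.sq_sqrt ?_
  simpa [Matrix.conjTranspose_eq_transpose_of_trivial] using
    (Matrix.posSemidef_conjTranspose_mul_self A).trace_nonneg

lemma enorm'_sq (v : Fin 3 → ℝ) : enorm' v ^ 2 = v ⬝ᵥ v :=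
  Real.sq_sqrt (by simpa using dotProduct_self_star_nonneg v)

namespace SO3

variable {R S : Matrix (Fin 3) (Fin 3) ℝ}

lemma mul_transpose_self (hR : SO3 R) : R * Rᵀ = 1 := mul_eq_one_comm.mp hR.1

lemma transpose (hR : SO3 R) : SO3 Rᵀ :=
  ⟨by rw [transpose_transpose, hR.mul_transpose_self], by rw [det_transpose, hR.2]⟩

lemma mul (hR : SO3 R) (hS : SO3 S) : SO3 (R * S) := by
  refine ⟨?_, by rw [det_mul, hR.2, hS.2, one_mul]⟩
  rw [transpose_mul, Matrix.mul_assoc, ← Matrix.mul_assoc Rᵀ, hR.1, Matrix.one_mul, hS.1]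

lemma adjugate_eq_transpose (hR : SO3 R) : R.adjugate = Rᵀ := by
  rw [← inv_eq_left_inv hR.1, inv_def, hR.2, Ring.inverse_one, one_smul]

lemma vee_sub_transpose_dotProduct_self (hR : SO3 R) :
    vee (R - Rᵀ) ⬝ᵥ vee (R - Rᵀ) = (3 - R.trace) * (1 + R.trace) := by
  have hadj := hR.adjugate_eq_transpose
  rw [adjugate_fin_three] at hadj
  have minor₀ : R 1 1 * R 2 2 - R 1 2 * R 2 1 = R 0 0 := by simpa using congrFun₂ hadj 0 0
  have minor₁ : R 0 0 * R 2 2 - R 0 2 * R 2 0 = R 1 1 := by simpa using congrFun₂ hadj 1 1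
  have minor₂ : R 0 0 * R 1 1 - R 0 1 * R 1 0 = R 2 2 := by simpa using congrFun₂ hadj 2 2
  have row (i : Fin 3) : R i 0 * R i 0 + R i 1 * R i 1 + R i 2 * R i 2 = 1 := by
    simpa [mul_apply, Fin.sum_univ_three] using congrFun₂ hR.mul_transpose_self i i
  simp only [vee, dotProduct, Fin.sum_univ_three, Matrix.sub_apply, transpose_apply,
    trace_fin_three, Fin.isValue, cons_val_zero, cons_val_one, cons_val]
  linear_combination row 0 + row 1 + row 2 + 2 * minor₀ + 2 * minor₁ + 2 * minor₂

end SO3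

lemma fnorm_sub_sq_of_orthogonal {R S : Matrix (Fin 3) (Fin 3) ℝ} (hR : Rᵀ * R = 1)
    (hS : Sᵀ * S = 1) : fnorm (R - S) ^ 2 = 2 * (3 - (Sᵀ * R).trace) := by
  have hRS : (Rᵀ * S).trace = (Sᵀ * R).trace := by
    rw [← trace_transpose, transpose_mul, transpose_transpose]
  rw [fnorm_sq, transpose_sub, sub_mul, mul_sub, mul_sub, trace_sub, trace_sub, trace_sub, hR, hS,
    hRS, trace_one, Fintype.card_fin]
  ring

theorem ER_le_eR_general (a : ℝ) (ha : 0 < a)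
    (R Rd : Matrix (Fin 3) (Fin 3) ℝ) (hR : SO3 R) (hRd : SO3 Rd)
    (hclose : fnorm (R - Rd) ≤ 2 * Real.sqrt (2 * a)) :
    (1 - a) / 2 * fnorm (R - Rd) ^ 2 ≤
      (enorm' ((1 / 2 : ℝ) • vee (Rdᵀ * R - Rᵀ * Rd))) ^ 2 := by
  set Q := Rdᵀ * R
  have hQ : SO3 Q := hRd.transpose.mul hR
  have herr : Rdᵀ * R - Rᵀ * Rd = Q - Qᵀ := by rw [transpose_mul, transpose_transpose]
  have hdist : fnorm (R - Rd) ^ 2 = 2 * (3 - Q.trace) := fnorm_sub_sq_of_orthogonal hR.1 hRd.1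
  have hψ_nonneg : 0 ≤ 3 - Q.trace := by nlinarith [sq_nonneg (fnorm (R - Rd))]
  have hψ_le : 3 - Q.trace ≤ 4 * a := by
    have hsq : fnorm (R - Rd) ^ 2 ≤ (2 * Real.sqrt (2 * a)) ^ 2 :=
      pow_le_pow_left₀ (Real.sqrt_nonneg _) hclose 2
    rw [hdist, mul_pow, Real.sq_sqrt (by positivity)] at hsq
    linarith
  rw [enorm'_sq, dotProduct_smul, smul_dotProduct, herr, hQ.vee_sub_transpose_dotProduct_self,
    hdist, smul_eq_mul, smul_eq_mul]
  nlinarith [mul_nonneg hψ_nonneg (sub_nonneg.2 hψ_le)]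

theorem ER_le_eR (a : ℝ) (ha : 0 < a) (ha1 : a < 1)
    (R Rd : Matrix (Fin 3) (Fin 3) ℝ) (hR : SO3 R) (hRd : SO3 Rd)
    (hclose : fnorm (R - Rd) ≤ 2 * Real.sqrt (2 * a)) :
    (1 - a) / 2 * fnorm (R - Rd) ^ 2 ≤
      (enorm' ((1 / 2 : ℝ) • vee (Rdᵀ * R - Rᵀ * Rd))) ^ 2 :=
  ER_le_eR_general a ha R Rd hR hRd hclose
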